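/- arXiv:1210.5659 — 4 statements merged into one kernel-verified Lean document; each statement's English description precedes it below -/
import Mathlib

section
/- The implementation distance d is well-defined (the defining system of equations has a unique least fixed point, since it is a contraction with Lipschitz constant λ on the complete space of functions into [0,∞]), and d is a pseudometric on the states of implementations: d(i,i) = 0 for every state i, d(i₁,i₂) = d(i₂,i₁) for all states i₁, i₂, and d(i₁,i₂) + d(i₂,i₃) ≥ d(i₁,i₃) for all states i₁, i₂, i₃. -/
open scoped ENNReal

namespace WMTSQuant

/-- A closed extended-integer interval `[lo, hi]` with `lo ∈ ℤ ∪ {-∞}`,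
`hi ∈ ℤ ∪ {∞}` and `lo ≤ hi`. -/
structure EInterval where
  lo : EReal
  hi : EReal
  lo_mem : lo = ⊥ ∨ ∃ n : ℤ, lo = ((n : ℝ) : EReal)
  hi_mem : hi = ⊤ ∨ ∃ n : ℤ, hi = ((n : ℝ) : EReal)
  lo_le_hi : lo ≤ hi

/-- Specification labels 𝕂 = Σ × 𝕀. -/
abbrev SLabel (Act : Type) := Act × EInterval

/-- The refinement order ⊑ on specification labels. -/
def LabelLE {Act : Type} (k k' : SLabel Act) : Prop :=
  k.1 = k'.1 ∧ k'.2.lo ≤ k.2.lo ∧ k.2.hi ≤ k'.2.hi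

/-- Implementation labels: singleton integer intervals. -/
def IsImpLabel {Act : Type} (k : SLabel Act) : Prop :=
  ∃ n : ℤ, k.2.lo = ((n : ℝ) : EReal) ∧ k.2.hi = ((n : ℝ) : EReal)

/-- Truncation of an extended real to `[0,∞]`. -/
noncomputable def erealToNNE (x : EReal) : ℝ≥0∞ :=
  if x = ⊤ then ⊤ else ENNReal.ofReal x.toReal

open Classical in
/-- The label distance d_𝕂. -/
noncomputable def dK {Act : Type} (k ℓ : SLabel Act) : ℝ≥0∞ :=
  if k.1 = ℓ.1 then erealToNNE (max (ℓ.2.lo - k.2.lo) (max (k.2.hi - ℓ.2.hi) 0)) else ⊤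

/-- Weighted modal transition systems. -/
structure WMTS (Act : Type) where
  State : Type
  init : State
  may : State → SLabel Act → State → Prop
  must : State → SLabel Act → State → Prop
  must_may : ∀ s k s', must s k s' → ∃ ℓ, LabelLE k ℓ ∧ may s ℓ s'

variable {Act : Type}

/-- Implementations: `must = may`, all labels singleton integer intervals. -/
def WMTS.IsImplementation (S : WMTS Act) : Prop :=
  (∀ s k s', S.may s k s' ↔ S.must s k s') ∧
    ∀ s k s', S.must s k s' → IsImpLabel k

/-- (Boolean) modal refinement `S₁ ≤ₘ S₂`. -/
def Refines (S₁ S₂ : WMTS Act) : Prop :=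
  ∃ R : S₁.State → S₂.State → Prop, R S₁.init S₂.init ∧
    ∀ s₁ s₂, R s₁ s₂ →
      (∀ k₁ t₁, S₁.may s₁ k₁ t₁ →
        ∃ k₂ t₂, S₂.may s₂ k₂ t₂ ∧ LabelLE k₁ k₂ ∧ R t₁ t₂) ∧
      (∀ k₂ t₂, S₂.must s₂ k₂ t₂ →
        ∃ k₁ t₁, S₁.must s₁ k₁ t₁ ∧ LabelLE k₁ k₂ ∧ R t₁ t₂)

/-- Implementation semantics ⟦S⟧. -/
def Impl (S : WMTS Act) : Set (WMTS Act) :=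
  {I | I.IsImplementation ∧ Refines I S}

/-- The endofunction whose least fixed point is the modal refinement distance. -/
noncomputable def dmF (lam : ℝ≥0∞) (S₁ S₂ : WMTS Act) :
    (S₁.State → S₂.State → ℝ≥0∞) →o (S₁.State → S₂.State → ℝ≥0∞) where
  toFun f := fun s₁ s₂ =>
    max
      (⨆ k₁, ⨆ t₁, ⨆ _ : S₁.may s₁ k₁ t₁,
        ⨅ k₂, ⨅ t₂, ⨅ _ : S₂.may s₂ k₂ t₂, dK k₁ k₂ + lam * f t₁ t₂)
      (⨆ k₂, ⨆ t₂, ⨆ _ : S₂.must s₂ k₂ t₂,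
        ⨅ k₁, ⨅ t₁, ⨅ _ : S₁.must s₁ k₁ t₁, dK k₁ k₂ + lam * f t₁ t₂)
  monotone' := by
    intro f g hfg s₁ s₂
    dsimp only
    gcongr with k₁ t₁ h k₂ t₂ h' k₂ t₂ h k₁ t₁ h' <;> exact hfg _ _

/-- The modal refinement distance between states. -/
noncomputable def dm (lam : ℝ≥0∞) (S₁ S₂ : WMTS Act) :
    S₁.State → S₂.State → ℝ≥0∞ :=
  OrderHom.lfp (dmF lam S₁ S₂)

/-- The modal refinement distance between systems. -/
noncomputable def dmInit (lam : ℝ≥0∞) (S₁ S₂ : WMTS Act) : ℝ≥0∞ :=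
  dm lam S₁ S₂ S₁.init S₂.init

/-- The endofunction whose least fixed point is the implementation distance. -/
noncomputable def diF (lam : ℝ≥0∞) (I₁ I₂ : WMTS Act) :
    (I₁.State → I₂.State → ℝ≥0∞) →o (I₁.State → I₂.State → ℝ≥0∞) where
  toFun f := fun i₁ i₂ =>
    max
      (⨆ k₁, ⨆ j₁, ⨆ _ : I₁.must i₁ k₁ j₁,
        ⨅ k₂, ⨅ j₂, ⨅ _ : I₂.must i₂ k₂ j₂, dK k₁ k₂ + lam * f j₁ j₂)
      (⨆ k₂, ⨆ j₂, ⨆ _ : I₂.must i₂ k₂ j₂,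
        ⨅ k₁, ⨅ j₁, ⨅ _ : I₁.must i₁ k₁ j₁, dK k₁ k₂ + lam * f j₁ j₂)
  monotone' := by
    intro f g hfg i₁ i₂
    dsimp only
    gcongr with k₁ t₁ h k₂ t₂ h' k₂ t₂ h k₁ t₁ h' <;> exact hfg _ _

/-- The implementation distance between states of implementations. -/
noncomputable def di (lam : ℝ≥0∞) (I₁ I₂ : WMTS Act) :
    I₁.State → I₂.State → ℝ≥0∞ :=
  OrderHom.lfp (diF lam I₁ I₂)

/-- The implementation distance between implementations. -/
noncomputable def diInit (lam : ℝ≥0∞) (I₁ I₂ : WMTS Act) : ℝ≥0∞ :=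
  di lam I₁ I₂ I₁.init I₂.init

/-- The thorough refinement distance. -/
noncomputable def dt (lam : ℝ≥0∞) (S₁ S₂ : WMTS Act) : ℝ≥0∞ :=
  ⨆ I₁ ∈ Impl S₁, ⨅ I₂ ∈ Impl S₂, diInit lam I₁ I₂


/-- Pointwise sum of intervals. -/
noncomputable def EInterval.add (I J : EInterval) : EInterval where
  lo := I.lo + J.lo
  hi := I.hi + J.hi
  lo_mem := by
    rcases I.lo_mem with h | ⟨n, h⟩
    · exact Or.inl (by rw [h, EReal.bot_add])
    · rcases J.lo_mem with h' | ⟨m, h'⟩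
      · exact Or.inl (by rw [h', EReal.add_bot])
      · exact Or.inr ⟨n + m, by rw [h, h', ← EReal.coe_add]; norm_cast⟩
  hi_mem := by
    rcases I.hi_mem with h | ⟨n, h⟩
    · exact Or.inl (by rw [h, EReal.top_add_of_ne_bot]
                       rcases J.hi_mem with h' | ⟨m, h'⟩ <;> simp [h'])
    · rcases J.hi_mem with h' | ⟨m, h'⟩
      · exact Or.inl (by rw [h', EReal.add_top_of_ne_bot]; simp [h])
      · exact Or.inr ⟨n + m, by rw [h, h', ← EReal.coe_add]; norm_cast⟩
  lo_le_hi := add_le_add I.lo_le_hi J.lo_le_hi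

/-- Widening `I ± δ` of an interval. -/
noncomputable def EInterval.widen (I : EInterval) (δ : ℕ) : EInterval where
  lo := I.lo - ((δ : ℝ) : EReal)
  hi := I.hi + ((δ : ℝ) : EReal)
  lo_mem := by
    rcases I.lo_mem with h | ⟨n, h⟩
    · exact Or.inl (by rw [h, EReal.bot_sub])
    · exact Or.inr ⟨n - δ, by rw [h, ← EReal.coe_sub]; norm_cast⟩
  hi_mem := by
    rcases I.hi_mem with h | ⟨n, h⟩
    · exact Or.inl (by rw [h, EReal.top_add_of_ne_bot]; exact EReal.coe_ne_bot _)
    · exact Or.inr ⟨n + δ, by rw [h, ← EReal.coe_add]; norm_cast⟩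
  lo_le_hi := by
    refine le_trans ?_ (le_trans I.lo_le_hi ?_)
    · rw [sub_eq_add_neg]
      nth_rewrite 2 [show I.lo = I.lo + 0 by rw [add_zero]]
      refine add_le_add le_rfl ?_
      rw [← EReal.coe_neg, ← EReal.coe_zero, EReal.coe_le_coe_iff]
      simp
    · nth_rewrite 1 [show I.hi = I.hi + 0 by rw [add_zero]]
      refine add_le_add le_rfl ?_
      rw [← EReal.coe_zero, EReal.coe_le_coe_iff]
      simp



/-- Symmetrization of a hemimetric. -/
noncomputable def symDist {α : Type*} (d : α → α → ℝ≥0∞) : α → α → ℝ≥0∞ :=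
  fun x y => max (d x y) (d y x)

/-- Product distance. -/
noncomputable def prodDist {α β : Type*} (d : α → α → ℝ≥0∞) (e : β → β → ℝ≥0∞) :
    α × β → α × β → ℝ≥0∞ :=
  fun p q => d p.1 q.1 + e p.2 q.2

/-- (Sequential) compactness of a set with respect to an `ℝ≥0∞`-valued distance. -/
def CompactIn {α : Type*} (d : α → α → ℝ≥0∞) (A : Set α) : Prop :=
  ∀ u : ℕ → α, (∀ n, u n ∈ A) →
    ∃ x ∈ A, ∃ φ : ℕ → ℕ, StrictMono φ ∧
      Filter.Tendsto (fun n => d x (u (φ n))) Filter.atTop (nhds 0)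

/-- Compactly branching WMTS. -/
def CompactlyBranching (lam : ℝ≥0∞) (S : WMTS Act) : Prop :=
  ∀ s : S.State,
    CompactIn (prodDist (symDist (dm lam S S)) (symDist dK))
      {p : S.State × SLabel Act | S.may s p.2 p.1} ∧
    CompactIn (prodDist (symDist (dm lam S S)) (symDist dK))
      {p : S.State × SLabel Act | S.must s p.2 p.1}

/-- Deterministic WMTS. -/
def Deterministic (S : WMTS Act) : Prop :=
  ∀ (s : S.State) (a : Act) (I₁ I₂ : EInterval) (t₁ t₂ : S.State),
    S.may s (a, I₁) t₁ → S.may s (a, I₂) t₂ → I₁ = I₂ ∧ t₁ = t₂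

/-- `S'` is an ε-relaxation of `S`. -/
def Relaxation (lam ε : ℝ≥0∞) (S S' : WMTS Act) : Prop :=
  Refines S S' ∧ dmInit lam S' S ≤ ε

/-- The ε-extended implementation semantics ⟦S⟧⁺ᵉ. -/
def ImplExt (lam ε : ℝ≥0∞) (S : WMTS Act) : Set (WMTS Act) :=
  {I | I.IsImplementation ∧ dmInit lam I S ≤ ε}

/-- The δ-widening S⁺δ of a WMTS. -/
noncomputable def WMTS.widen (S : WMTS Act) (δ : ℕ) : WMTS Act where
  State := S.State
  init := S.init
  may s k t := ∃ a I, S.may s (a, I) t ∧ k = (a, I.widen δ)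
  must s k t := ∃ a I, S.must s (a, I) t ∧ k = (a, I.widen δ)
  must_may := by
    rintro s k t ⟨a, I, h, rfl⟩
    obtain ⟨ℓ, hle, hmay⟩ := S.must_may _ _ _ h
    refine ⟨(ℓ.1, ℓ.2.widen δ), ⟨hle.1, ?_, ?_⟩, ℓ.1, ℓ.2, hmay, rfl⟩
    · exact EReal.sub_le_sub hle.2.1 le_rfl
    · exact add_le_add hle.2.2 le_rfl

/-- Definedness of label synchronization ⊕. -/
def OplusDefined (k ℓ : SLabel Act) : Prop := k.1 = ℓ.1

/-- Label synchronization ⊕ (adding the intervals). -/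
noncomputable def oplus (k ℓ : SLabel Act) : SLabel Act :=
  (k.1, k.2.add ℓ.2)

/-- Definedness of label quotient ⊖ (equal actions, the difference interval is a
valid extended-integer interval). -/
def OminusDefined (k ℓ : SLabel Act) : Prop :=
  k.1 = ℓ.1 ∧ k.2.lo - ℓ.2.lo ≤ k.2.hi - ℓ.2.hi ∧
    (k.2.lo - ℓ.2.lo = ⊥ ∨ ∃ n : ℤ, k.2.lo - ℓ.2.lo = ((n : ℝ) : EReal)) ∧
    (k.2.hi - ℓ.2.hi = ⊤ ∨ ∃ n : ℤ, k.2.hi - ℓ.2.hi = ((n : ℝ) : EReal))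

/-- Label quotient ⊖. -/
noncomputable def ominus (k ℓ : SLabel Act) (h : OminusDefined k ℓ) : SLabel Act :=
  (k.1, ⟨k.2.lo - ℓ.2.lo, k.2.hi - ℓ.2.hi, h.2.2.1, h.2.2.2, h.2.1⟩)

/-- Structural composition S₁ ∥ S₂ (CSP-style synchronization, adding weights). -/
noncomputable def par (S₁ S₂ : WMTS Act) : WMTS Act where
  State := S₁.State × S₂.State
  init := (S₁.init, S₂.init)
  may p k q := ∃ k₁ k₂, S₁.may p.1 k₁ q.1 ∧ S₂.may p.2 k₂ q.2 ∧
    OplusDefined k₁ k₂ ∧ k = oplus k₁ k₂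
  must p k q := ∃ k₁ k₂, S₁.must p.1 k₁ q.1 ∧ S₂.must p.2 k₂ q.2 ∧
    OplusDefined k₁ k₂ ∧ k = oplus k₁ k₂
  must_may := by
    rintro p k q ⟨k₁, k₂, h₁, h₂, hd, rfl⟩
    obtain ⟨ℓ₁, hle₁, hmay₁⟩ := S₁.must_may _ _ _ h₁
    obtain ⟨ℓ₂, hle₂, hmay₂⟩ := S₂.must_may _ _ _ h₂
    refine ⟨oplus ℓ₁ ℓ₂, ⟨?_, ?_, ?_⟩,
      ℓ₁, ℓ₂, hmay₁, hmay₂, by rw [OplusDefined, ← hle₁.1, ← hle₂.1]; exact hd, rfl⟩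
    · exact hle₁.1
    · exact add_le_add hle₁.2.1 hle₂.2.1
    · exact add_le_add hle₁.2.2 hle₂.2.2

section Quotient

variable (S₁ S₂ : WMTS Act)

/-- May transitions of the (unpruned) quotient; `none` is the universal state u. -/
def qmay : Option (S₁.State × S₂.State) → SLabel Act → Option (S₁.State × S₂.State) → Prop
  | some p, k, some q =>
      (∃ k₁ k₂, ∃ h : OminusDefined k₁ k₂,
        S₁.may p.1 k₁ q.1 ∧ S₂.may p.2 k₂ q.2 ∧ k = ominus k₁ k₂ h) ∨
      (∃ k₁ k₂, ∃ h : OminusDefined k₁ k₂,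
        S₁.must p.1 k₁ q.1 ∧ S₂.must p.2 k₂ q.2 ∧ k = ominus k₁ k₂ h)
  | some p, k, none => ∀ k₂ t₂, S₂.may p.2 k₂ t₂ → ¬ OplusDefined k k₂
  | none, _, none => True
  | none, _, some _ => False

/-- Must transitions of the (unpruned) quotient. -/
def qmust : Option (S₁.State × S₂.State) → SLabel Act → Option (S₁.State × S₂.State) → Prop
  | some p, k, some q =>
      ∃ k₁ k₂, ∃ h : OminusDefined k₁ k₂,
        S₁.must p.1 k₁ q.1 ∧ S₂.must p.2 k₂ q.2 ∧ k = ominus k₁ k₂ h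
  | _, _, _ => False

/-- Inconsistent states of the quotient. -/
def QBad : Option (S₁.State × S₂.State) → Prop
  | some p => ∃ k₁ t₁, S₁.must p.1 k₁ t₁ ∧
      ∀ k₂ t₂, S₂.must p.2 k₂ t₂ → ¬ OminusDefined k₁ k₂
  | none => False

/-- States removed by pruning: those that can reach an inconsistent state via
must transitions (reflexive-transitive closure of `pre`). -/
def QPruned (p : Option (S₁.State × S₂.State)) : Prop :=
  ∃ q, Relation.ReflTransGen (fun x y => ∃ k, qmust S₁ S₂ x k y) p q ∧ QBad S₁ S₂ q

/-- The quotient S₁ ⫽ S₂, defined whenever the initial state survives pruning. -/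
noncomputable def quotient' (h : ¬ QPruned S₁ S₂ (some (S₁.init, S₂.init))) :
    WMTS Act where
  State := {p : Option (S₁.State × S₂.State) // ¬ QPruned S₁ S₂ p}
  init := ⟨some (S₁.init, S₂.init), h⟩
  may p k q := qmay S₁ S₂ p.1 k q.1
  must p k q := qmust S₁ S₂ p.1 k q.1
  must_may := by
    rintro ⟨p, hp⟩ k ⟨q, hq⟩ hmust
    refine ⟨k, ⟨rfl, le_rfl, le_rfl⟩, ?_⟩
    cases p with
    | none => exact hmust.elim
    | some p =>
      cases q with
      | none => exact hmust.elim
      | some q => exact Or.inr hmust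

end Quotient

/-- Formulae of the logic L. -/
inductive Formula (Act : Type) where
  | tt : Formula Act
  | ff : Formula Act
  | diam : SLabel Act → Formula Act → Formula Act
  | box : SLabel Act → Formula Act → Formula Act
  | and : Formula Act → Formula Act → Formula Act
  | or : Formula Act → Formula Act → Formula Act

/-- Disjunction-free formulae. -/
def Formula.DisjFree : Formula Act → Prop
  | .tt => True
  | .ff => True
  | .diam _ φ => φ.DisjFree
  | .box _ φ => φ.DisjFree
  | .and φ ψ => φ.DisjFree ∧ ψ.DisjFree
  | .or _ _ => False

/-- Quantitative semantics ⟦φ⟧ : S → [0,∞] of the logic L. -/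
noncomputable def sem (lam : ℝ≥0∞) (S : WMTS Act) : Formula Act → S.State → ℝ≥0∞
  | .tt, _ => 0
  | .ff, _ => ⊤
  | .and φ ψ, s => max (sem lam S φ s) (sem lam S ψ s)
  | .or φ ψ, s => min (sem lam S φ s) (sem lam S ψ s)
  | .diam ℓ φ, s =>
      ⨅ k, ⨅ t, ⨅ _ : S.must s k t ∧ dK k ℓ ≠ ⊤, dK k ℓ + lam * sem lam S φ t
  | .box ℓ φ, s =>
      ⨆ k, ⨆ t, ⨆ _ : S.may s k t ∧ dK k ℓ ≠ ⊤, dK k ℓ + lam * sem lam S φ t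

/-- ⟦φ⟧S = ⟦φ⟧s⁰. -/
noncomputable def semInit (lam : ℝ≥0∞) (S : WMTS Act) (φ : Formula Act) : ℝ≥0∞ :=
  sem lam S φ S.init

/-!
Well-definedness is Knaster–Tarski: `diF` is monotone on a complete lattice. Each pseudometric
law is obtained by exhibiting a prefixed point of `diF` that bounds `di` from above, `di` being
the least prefixed point: the discrete distance (`0` on the diagonal, `∞` elsewhere) gives
`d(i,i) = 0`; the flip of `di lam I₂ I₁` gives symmetry; and the min-plus composite
`fun i₁ i₃ => ⨅ i₂, d(i₁,i₂) + d(i₂,i₃)` gives the triangle inequality. All three rest on the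
fact that on integer labels `d_𝕂` is the metric `|n - m|` (or `∞` between different actions).
-/

lemma erealToNNE_coe (x : ℝ) : erealToNNE x = ENNReal.ofReal x := by
  simp [erealToNNE]

open Classical in
lemma dK_of_isImpLabel {k ℓ : SLabel Act} {n m : ℤ}
    (hk₁ : k.2.lo = ((n : ℝ) : EReal)) (hk₂ : k.2.hi = ((n : ℝ) : EReal))
    (hℓ₁ : ℓ.2.lo = ((m : ℝ) : EReal)) (hℓ₂ : ℓ.2.hi = ((m : ℝ) : EReal)) :
    dK k ℓ = if k.1 = ℓ.1 then ENNReal.ofReal |(n : ℝ) - m| else ⊤ := by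
  unfold dK
  split_ifs
  · rw [hk₁, hk₂, hℓ₁, hℓ₂, ← EReal.coe_sub, ← EReal.coe_sub, ← EReal.coe_zero,
      ← EReal.coe_strictMono.monotone.map_max, ← EReal.coe_strictMono.monotone.map_max,
      erealToNNE_coe]
    congr 1
    grind [abs_eq_max_neg]
  · rfl

lemma dK_self_of_isImpLabel {k : SLabel Act} (hk : IsImpLabel k) : dK k k = 0 := by
  obtain ⟨n, hk₁, hk₂⟩ := hk
  simp [dK_of_isImpLabel hk₁ hk₂ hk₁ hk₂]

lemma dK_comm_of_isImpLabel {k ℓ : SLabel Act} (hk : IsImpLabel k) (hℓ : IsImpLabel ℓ) :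
    dK k ℓ = dK ℓ k := by
  obtain ⟨n, hk₁, hk₂⟩ := hk
  obtain ⟨m, hℓ₁, hℓ₂⟩ := hℓ
  rw [dK_of_isImpLabel hk₁ hk₂ hℓ₁ hℓ₂, dK_of_isImpLabel hℓ₁ hℓ₂ hk₁ hk₂, abs_sub_comm]
  by_cases h : k.1 = ℓ.1 <;> simp [h, eq_comm]

lemma dK_triangle_of_isImpLabel {k₁ k₂ k₃ : SLabel Act}
    (h₁ : IsImpLabel k₁) (h₂ : IsImpLabel k₂) (h₃ : IsImpLabel k₃) :
    dK k₁ k₃ ≤ dK k₁ k₂ + dK k₂ k₃ := by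
  obtain ⟨n, h₁lo, h₁hi⟩ := h₁
  obtain ⟨m, h₂lo, h₂hi⟩ := h₂
  obtain ⟨p, h₃lo, h₃hi⟩ := h₃
  rw [dK_of_isImpLabel h₁lo h₁hi h₃lo h₃hi, dK_of_isImpLabel h₁lo h₁hi h₂lo h₂hi,
    dK_of_isImpLabel h₂lo h₂hi h₃lo h₃hi]
  by_cases h₁₂ : k₁.1 = k₂.1
  · by_cases h₂₃ : k₂.1 = k₃.1
    · rw [if_pos (h₁₂.trans h₂₃), if_pos h₁₂, if_pos h₂₃,
        ← ENNReal.ofReal_add (abs_nonneg _) (abs_nonneg _)]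
      exact ENNReal.ofReal_le_ofReal (abs_sub_le _ _ _)
    · simp [h₂₃]
  · simp [h₁₂]

def WMTS.ImpLabeled (I : WMTS Act) : Prop :=
  ∀ s k s', I.must s k s' → IsImpLabel k

noncomputable def diDirected (lam : ℝ≥0∞) (I₁ I₂ : WMTS Act)
    (f : I₁.State → I₂.State → ℝ≥0∞) (i₁ : I₁.State) (i₂ : I₂.State) : ℝ≥0∞ :=
  ⨆ k₁, ⨆ j₁, ⨆ _ : I₁.must i₁ k₁ j₁,
    ⨅ k₂, ⨅ j₂, ⨅ _ : I₂.must i₂ k₂ j₂, dK k₁ k₂ + lam * f j₁ j₂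

noncomputable def minPlusComp {α β γ : Type*} (f : α → β → ℝ≥0∞) (g : β → γ → ℝ≥0∞) :
    α → γ → ℝ≥0∞ :=
  fun a c => ⨅ b, f a b + g b c

lemma flip_minPlusComp {α β γ : Type*} (f : α → β → ℝ≥0∞) (g : β → γ → ℝ≥0∞) :
    flip (minPlusComp f g) = minPlusComp (flip g) (flip f) := by
  funext c a
  simp only [flip, minPlusComp, add_comm]

section ImplementationDistance

variable (lam : ℝ≥0∞) {I₁ I₂ I₃ : WMTS Act}

lemma diF_eq_max_diDirected (h₁ : I₁.ImpLabeled) (h₂ : I₂.ImpLabeled)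
    (f : I₁.State → I₂.State → ℝ≥0∞) (i₁ : I₁.State) (i₂ : I₂.State) :
    diF lam I₁ I₂ f i₁ i₂ =
      max (diDirected lam I₁ I₂ f i₁ i₂) (diDirected lam I₂ I₁ (flip f) i₂ i₁) := by
  refine congrArg (max _) ?_
  refine iSup_congr fun k₂ => iSup_congr fun j₂ => iSup_congr fun hk₂ =>
    iInf_congr fun k₁ => iInf_congr fun j₁ => iInf_congr fun hk₁ => ?_
  rw [dK_comm_of_isImpLabel (h₁ _ _ _ hk₁) (h₂ _ _ _ hk₂)]
  rfl

lemma diF_flip (h₁ : I₁.ImpLabeled) (h₂ : I₂.ImpLabeled)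
    (f : I₁.State → I₂.State → ℝ≥0∞) :
    diF lam I₂ I₁ (flip f) = flip (diF lam I₁ I₂ f) := by
  funext i₂ i₁
  rw [flip, diF_eq_max_diDirected lam h₂ h₁, diF_eq_max_diDirected lam h₁ h₂, max_comm]
  rfl

lemma diF_di (I₁ I₂ : WMTS Act) : diF lam I₁ I₂ (di lam I₁ I₂) = di lam I₁ I₂ :=
  OrderHom.map_lfp _

lemma di_le_flip_di (h₁ : I₁.ImpLabeled) (h₂ : I₂.ImpLabeled) :
    di lam I₁ I₂ ≤ flip (di lam I₂ I₁) :=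
  OrderHom.lfp_le_fixed _ <| by
    show diF lam I₁ I₂ (flip (di lam I₂ I₁)) = flip (di lam I₂ I₁)
    rw [diF_flip lam h₂ h₁, diF_di]

lemma di_comm (h₁ : I₁.ImpLabeled) (h₂ : I₂.ImpLabeled) (i₁ : I₁.State) (i₂ : I₂.State) :
    di lam I₁ I₂ i₁ i₂ = di lam I₂ I₁ i₂ i₁ :=
  le_antisymm (di_le_flip_di lam h₁ h₂ i₁ i₂) (di_le_flip_di lam h₂ h₁ i₂ i₁)

lemma diDirected_self_eq_zero (h : I₁.ImpLabeled) {D : I₁.State → I₁.State → ℝ≥0∞}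
    (hD : ∀ j, D j j = 0) (i : I₁.State) : diDirected lam I₁ I₁ D i i = 0 :=
  nonpos_iff_eq_zero.1 <| iSup_le fun k => iSup₂_le fun j hk =>
    iInf_le_of_le k <| iInf₂_le_of_le j hk <| by
      rw [dK_self_of_isImpLabel (h _ _ _ hk), hD, mul_zero, add_zero]

lemma di_self (h : I₁.ImpLabeled) (i : I₁.State) : di lam I₁ I₁ i i = 0 := by
  classical
  let D : I₁.State → I₁.State → ℝ≥0∞ := fun a b => if a = b then 0 else ⊤
  have hD : ∀ j, D j j = 0 := fun j => if_pos rfl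
  have hprefixed : diF lam I₁ I₁ D ≤ D := by
    intro a b
    by_cases hab : a = b
    · subst hab
      rw [diF_eq_max_diDirected lam h h, diDirected_self_eq_zero lam h hD,
        diDirected_self_eq_zero lam h (D := flip D) hD, max_self]
      exact zero_le
    · simp [D, hab]
  exact nonpos_iff_eq_zero.1 ((OrderHom.lfp_le _ hprefixed i i).trans_eq (hD i))

lemma diDirected_minPlusComp_le (h₁ : I₁.ImpLabeled) (h₂ : I₂.ImpLabeled) (h₃ : I₃.ImpLabeled)
    (f : I₁.State → I₂.State → ℝ≥0∞) (g : I₂.State → I₃.State → ℝ≥0∞)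
    (a : I₁.State) (b : I₂.State) (c : I₃.State) :
    diDirected lam I₁ I₃ (minPlusComp f g) a c ≤
      diDirected lam I₁ I₂ f a b + diDirected lam I₂ I₃ g b c := by
  refine iSup_le fun k₁ => iSup₂_le fun j₁ hk₁ => ?_
  have hf : (⨅ k₂, ⨅ j₂, ⨅ _ : I₂.must b k₂ j₂, dK k₁ k₂ + lam * f j₁ j₂) ≤
      diDirected lam I₁ I₂ f a b :=
    le_iSup_of_le k₁ <| le_iSup₂_of_le j₁ hk₁ le_rfl
  refine le_trans ?_ (add_le_add_left hf _)
  simp only [ENNReal.iInf_add]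
  refine le_iInf fun k₂ => le_iInf₂ fun j₂ hk₂ => ?_
  have hg : (⨅ k₃, ⨅ j₃, ⨅ _ : I₃.must c k₃ j₃, dK k₂ k₃ + lam * g j₂ j₃) ≤
      diDirected lam I₂ I₃ g b c :=
    le_iSup_of_le k₂ <| le_iSup₂_of_le j₂ hk₂ le_rfl
  refine le_trans ?_ (add_le_add_right hg _)
  simp only [ENNReal.add_iInf]
  refine le_iInf fun k₃ => le_iInf₂ fun j₃ hk₃ => iInf_le_of_le k₃ <| iInf₂_le_of_le j₃ hk₃ ?_
  calc dK k₁ k₃ + lam * minPlusComp f g j₁ j₃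
      ≤ (dK k₁ k₂ + dK k₂ k₃) + lam * (f j₁ j₂ + g j₂ j₃) := by
        gcongr
        · exact dK_triangle_of_isImpLabel (h₁ _ _ _ hk₁) (h₂ _ _ _ hk₂) (h₃ _ _ _ hk₃)
        · exact iInf_le _ j₂
    _ = dK k₁ k₂ + lam * f j₁ j₂ + (dK k₂ k₃ + lam * g j₂ j₃) := by ring

lemma diF_minPlusComp_le (h₁ : I₁.ImpLabeled) (h₂ : I₂.ImpLabeled) (h₃ : I₃.ImpLabeled)
    (f : I₁.State → I₂.State → ℝ≥0∞) (g : I₂.State → I₃.State → ℝ≥0∞)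
    (a : I₁.State) (b : I₂.State) (c : I₃.State) :
    diF lam I₁ I₃ (minPlusComp f g) a c ≤ diF lam I₁ I₂ f a b + diF lam I₂ I₃ g b c := by
  rw [diF_eq_max_diDirected lam h₁ h₃, diF_eq_max_diDirected lam h₁ h₂,
    diF_eq_max_diDirected lam h₂ h₃, flip_minPlusComp]
  refine max_le ?_ ?_
  · exact (diDirected_minPlusComp_le lam h₁ h₂ h₃ f g a b c).trans
      (add_le_add (le_max_left _ _) (le_max_left _ _))
  · -- the mirrored half is the first half for the reversed chain `I₃, I₂, I₁`
    rw [add_comm]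
    exact (diDirected_minPlusComp_le lam h₃ h₂ h₁ (flip g) (flip f) c b a).trans
      (add_le_add (le_max_right _ _) (le_max_right _ _))

lemma di_triangle (h₁ : I₁.ImpLabeled) (h₂ : I₂.ImpLabeled) (h₃ : I₃.ImpLabeled)
    (i₁ : I₁.State) (i₂ : I₂.State) (i₃ : I₃.State) :
    di lam I₁ I₃ i₁ i₃ ≤ di lam I₁ I₂ i₁ i₂ + di lam I₂ I₃ i₂ i₃ := by
  have hprefixed : diF lam I₁ I₃ (minPlusComp (di lam I₁ I₂) (di lam I₂ I₃)) ≤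
      minPlusComp (di lam I₁ I₂) (di lam I₂ I₃) := fun a c => le_iInf fun b => by
    simpa only [diF_di] using diF_minPlusComp_le lam h₁ h₂ h₃ (di lam I₁ I₂) (di lam I₂ I₃) a b c
  exact (OrderHom.lfp_le _ hprefixed i₁ i₃).trans (iInf_le _ i₂)

end ImplementationDistance

theorem implementation_distance_wellDefined_and_pseudometric_general
    {Act : Type} (lam : ℝ≥0∞)
    (I₁ I₂ I₃ : WMTS Act)
    (h₁ : I₁.IsImplementation) (h₂ : I₂.IsImplementation)
    (h₃ : I₃.IsImplementation) :
    (∃! f : I₁.State → I₂.State → ℝ≥0∞,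
        Function.IsFixedPt (diF lam I₁ I₂) f ∧
          ∀ g, Function.IsFixedPt (diF lam I₁ I₂) g → f ≤ g) ∧
    Function.IsFixedPt (diF lam I₁ I₂) (di lam I₁ I₂) ∧
    (∀ g, Function.IsFixedPt (diF lam I₁ I₂) g → di lam I₁ I₂ ≤ g) ∧
    (∀ i : I₁.State, di lam I₁ I₁ i i = 0) ∧
    (∀ (i₁ : I₁.State) (i₂ : I₂.State),
      di lam I₁ I₂ i₁ i₂ = di lam I₂ I₁ i₂ i₁) ∧
    (∀ (i₁ : I₁.State) (i₂ : I₂.State) (i₃ : I₃.State),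
      di lam I₁ I₃ i₁ i₃ ≤ di lam I₁ I₂ i₁ i₂ + di lam I₂ I₃ i₂ i₃) := by
  have hleast : IsLeast (Function.fixedPoints (diF lam I₁ I₂)) (di lam I₁ I₂) :=
    (diF lam I₁ I₂).isLeast_lfp
  exact ⟨⟨di lam I₁ I₂, hleast, fun f hf => IsLeast.unique (s := Function.fixedPoints _) hf hleast⟩,
    hleast.1, fun g hg => hleast.2 hg,
    di_self lam h₁.2, di_comm lam h₁.2 h₂.2, di_triangle lam h₁.2 h₂.2 h₃.2⟩

/-- the implementation distance is well-defined (the defining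
system of equations has a unique least fixed point) and is a pseudometric. -/
theorem implementation_distance_wellDefined_and_pseudometric
    {Act : Type} (lam : ℝ≥0∞) (hlam0 : 0 < lam) (hlam1 : lam < 1)
    (I₁ I₂ I₃ : WMTS Act)
    (h₁ : I₁.IsImplementation) (h₂ : I₂.IsImplementation)
    (h₃ : I₃.IsImplementation) :
    (∃! f : I₁.State → I₂.State → ℝ≥0∞,
        Function.IsFixedPt (diF lam I₁ I₂) f ∧
          ∀ g, Function.IsFixedPt (diF lam I₁ I₂) g → f ≤ g) ∧
    Function.IsFixedPt (diF lam I₁ I₂) (di lam I₁ I₂) ∧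
    (∀ g, Function.IsFixedPt (diF lam I₁ I₂) g → di lam I₁ I₂ ≤ g) ∧
    (∀ i : I₁.State, di lam I₁ I₁ i i = 0) ∧
    (∀ (i₁ : I₁.State) (i₂ : I₂.State),
      di lam I₁ I₂ i₁ i₂ = di lam I₂ I₁ i₂ i₁) ∧
    (∀ (i₁ : I₁.State) (i₂ : I₂.State) (i₃ : I₃.State),
      di lam I₁ I₃ i₁ i₃ ≤ di lam I₁ I₂ i₁ i₂ + di lam I₂ I₃ i₂ i₃) :=
  implementation_distance_wellDefined_and_pseudometric_general lam I₁ I₂ I₃ h₁ h₂ h₃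

end WMTSQuant
end

section
/- The modal refinement distance d_m is well-defined (the defining system of equations, being a contraction with Lipschitz constant λ, has a unique least fixed point) and is a hemimetric: d_m(s,s) = 0 for every state s of a WMTS, and d_m(s₁,s₂) + d_m(s₂,s₃) ≥ d_m(s₁,s₃) for all states s₁, s₂, s₃ of WMTS S₁, S₂, S₃. -/
open scoped ENNReal

theorem EReal.toENNReal_sub_le_add (x y z : EReal) :
    (z - x).toENNReal ≤ (y - x).toENNReal + (z - y).toENNReal := by
  induction x <;> induction y <;> induction z
  case coe.coe.coe x y z =>
    rw [← EReal.coe_sub, ← EReal.coe_sub, ← EReal.coe_sub, show z - x = (y - x) + (z - y) by ring]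
    exact EReal.toENNReal_add_le
  all_goals simp [sub_eq_add_neg]

-- Triangle inequality for directed Hausdorff liftings of cost functions.
theorem ENNReal.biSup_biInf_le_add {α β γ : Type*} {A : Set α} {B : Set β} {C : Set γ}
    {f : α → β → ℝ≥0∞} {g : β → γ → ℝ≥0∞} {h : α → γ → ℝ≥0∞}
    (hfg : ∀ a b c, h a c ≤ f a b + g b c) :
    ⨆ a ∈ A, ⨅ c ∈ C, h a c ≤ (⨆ a ∈ A, ⨅ b ∈ B, f a b) + ⨆ b ∈ B, ⨅ c ∈ C, g b c := by
  refine iSup₂_le fun a ha => ?_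
  calc ⨅ c ∈ C, h a c ≤ ⨅ b ∈ B, (f a b + ⨆ b ∈ B, ⨅ c ∈ C, g b c) := by
        refine le_iInf₂ fun b hb => ?_
        calc ⨅ c ∈ C, h a c ≤ ⨅ c ∈ C, (f a b + g b c) := iInf₂_mono fun c _ => hfg a b c
          _ = f a b + ⨅ c ∈ C, g b c := (ENNReal.add_iInf₂ _).symm
          _ ≤ f a b + ⨆ b ∈ B, ⨅ c ∈ C, g b c := by gcongr; exact le_iSup₂_of_le b hb le_rfl
    _ = (⨅ b ∈ B, f a b) + ⨆ b ∈ B, ⨅ c ∈ C, g b c := (ENNReal.iInf₂_add _).symm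
    _ ≤ _ := by gcongr; exact le_iSup₂_of_le a ha le_rfl

namespace WMTSQuant

variable {Act : Type}

def WMTS.maySucc (S : WMTS Act) (s : S.State) : Set (SLabel Act × S.State) :=
  {x | S.may s x.1 x.2}

def WMTS.mustSucc (S : WMTS Act) (s : S.State) : Set (SLabel Act × S.State) :=
  {x | S.must s x.1 x.2}

noncomputable def stepCost {X Y : Type} (lam : ℝ≥0∞) (f : X → Y → ℝ≥0∞)
    (x : SLabel Act × X) (y : SLabel Act × Y) : ℝ≥0∞ :=
  dK x.1 y.1 + lam * f x.2 y.2

theorem dmF_apply_eq (lam : ℝ≥0∞) (S₁ S₂ : WMTS Act) (f : S₁.State → S₂.State → ℝ≥0∞)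
    (s₁ : S₁.State) (s₂ : S₂.State) :
    dmF lam S₁ S₂ f s₁ s₂ =
      max (⨆ x ∈ S₁.maySucc s₁, ⨅ y ∈ S₂.maySucc s₂, stepCost lam f x y)
        (⨆ y ∈ S₂.mustSucc s₂, ⨅ x ∈ S₁.mustSucc s₁, stepCost lam f x y) := by
  simp only [dmF, OrderHom.coe_mk, iSup_prod', iInf_prod']
  rfl

theorem dK_of_fst_eq {k ℓ : SLabel Act} (h : k.1 = ℓ.1) :
    dK k ℓ = max (ℓ.2.lo - k.2.lo).toENNReal (k.2.hi - ℓ.2.hi).toENNReal := by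
  have hmono : Monotone EReal.toENNReal := fun _ _ => EReal.toENNReal_le_toENNReal
  simp only [dK, if_pos h]
  rw [show erealToNNE = EReal.toENNReal from rfl, hmono.map_max, hmono.map_max,
    EReal.toENNReal_zero, max_eq_left zero_le]

theorem dK_self (k : SLabel Act) : dK k k = 0 := by
  simp [dK_of_fst_eq rfl, EReal.toENNReal_of_nonpos EReal.sub_self_le_zero]

theorem dK_triangle (k₁ k₂ k₃ : SLabel Act) : dK k₁ k₃ ≤ dK k₁ k₂ + dK k₂ k₃ := by
  by_cases h₁₂ : k₁.1 = k₂.1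
  · by_cases h₂₃ : k₂.1 = k₃.1
    · rw [dK_of_fst_eq (h₁₂.trans h₂₃), dK_of_fst_eq h₁₂, dK_of_fst_eq h₂₃]
      refine max_le ?_ ?_
      · calc _ ≤ (k₂.2.lo - k₁.2.lo).toENNReal + (k₃.2.lo - k₂.2.lo).toENNReal :=
              EReal.toENNReal_sub_le_add _ _ _
          _ ≤ _ := add_le_add (le_max_left _ _) (le_max_left _ _)
      · calc _ ≤ (k₁.2.hi - k₂.2.hi).toENNReal + (k₂.2.hi - k₃.2.hi).toENNReal := by
              rw [add_comm]; exact EReal.toENNReal_sub_le_add _ _ _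
          _ ≤ _ := add_le_add (le_max_right _ _) (le_max_right _ _)
    · simp [dK, h₂₃]
  · simp [dK, h₁₂]

theorem stepCost_le_add {X Y Z : Type} (lam : ℝ≥0∞) {f : X → Y → ℝ≥0∞} {g : Y → Z → ℝ≥0∞}
    {h : X → Z → ℝ≥0∞} (hfg : ∀ a b c, h a c ≤ f a b + g b c)
    (x : SLabel Act × X) (y : SLabel Act × Y) (z : SLabel Act × Z) :
    stepCost lam h x z ≤ stepCost lam f x y + stepCost lam g y z :=
  calc dK x.1 z.1 + lam * h x.2 z.2
      ≤ (dK x.1 y.1 + dK y.1 z.1) + lam * (f x.2 y.2 + g y.2 z.2) := by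
        gcongr
        exacts [dK_triangle _ _ _, hfg _ _ _]
    _ = stepCost lam f x y + stepCost lam g y z := by unfold stepCost; ring

theorem dmF_le_add {lam : ℝ≥0∞} {S₁ S₂ S₃ : WMTS Act} {f : S₁.State → S₂.State → ℝ≥0∞}
    {g : S₂.State → S₃.State → ℝ≥0∞} {h : S₁.State → S₃.State → ℝ≥0∞}
    (hfg : ∀ a b c, h a c ≤ f a b + g b c) (s₁ : S₁.State) (s₂ : S₂.State) (s₃ : S₃.State) :
    dmF lam S₁ S₃ h s₁ s₃ ≤ dmF lam S₁ S₂ f s₁ s₂ + dmF lam S₂ S₃ g s₂ s₃ := by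
  simp only [dmF_apply_eq]
  refine max_le ?_ ?_
  · exact (ENNReal.biSup_biInf_le_add (stepCost_le_add lam hfg)).trans
      (add_le_add (le_max_left _ _) (le_max_left _ _))
  · rw [add_comm]
    exact (ENNReal.biSup_biInf_le_add fun z y x =>
        (stepCost_le_add lam hfg x y z).trans_eq (add_comm _ _)).trans
      (add_le_add (le_max_right _ _) (le_max_right _ _))

theorem dmF_apply_self_eq_zero {lam : ℝ≥0∞} {S : WMTS Act} {f : S.State → S.State → ℝ≥0∞}
    (hf : ∀ s, f s s = 0) (s : S.State) : dmF lam S S f s s = 0 := by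
  have hcost (x : SLabel Act × S.State) : stepCost lam f x x = 0 := by
    simp [stepCost, dK_self, hf]
  rw [dmF_apply_eq]
  refine le_antisymm (max_le ?_ ?_) zero_le <;>
    exact iSup₂_le fun x hx => iInf₂_le_of_le x hx (hcost x).le

theorem dm_isFixedPt (lam : ℝ≥0∞) (S₁ S₂ : WMTS Act) :
    Function.IsFixedPt (dmF lam S₁ S₂) (dm lam S₁ S₂) :=
  OrderHom.map_lfp _

theorem dm_le_of_isFixedPt {lam : ℝ≥0∞} {S₁ S₂ : WMTS Act} {g : S₁.State → S₂.State → ℝ≥0∞}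
    (hg : Function.IsFixedPt (dmF lam S₁ S₂) g) : dm lam S₁ S₂ ≤ g :=
  OrderHom.lfp_le_fixed _ hg

theorem dm_self (lam : ℝ≥0∞) (S : WMTS Act) (s : S.State) : dm lam S S s s = 0 := by
  classical
  let discrete : S.State → S.State → ℝ≥0∞ := fun a b => if a = b then 0 else ⊤
  have hpre : dmF lam S S discrete ≤ discrete := by
    intro a b
    by_cases hab : a = b
    · subst hab
      exact (dmF_apply_self_eq_zero (f := discrete) (fun _ => if_pos rfl) a).trans_le zero_le
    · simp [discrete, hab]
  exact nonpos_iff_eq_zero.1 ((OrderHom.lfp_le _ hpre s s).trans_eq (if_pos rfl))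

theorem dm_triangle (lam : ℝ≥0∞) (S₁ S₂ S₃ : WMTS Act)
    (s₁ : S₁.State) (s₂ : S₂.State) (s₃ : S₃.State) :
    dm lam S₁ S₃ s₁ s₃ ≤ dm lam S₁ S₂ s₁ s₂ + dm lam S₂ S₃ s₂ s₃ := by
  let comp : S₁.State → S₃.State → ℝ≥0∞ := fun a c => ⨅ b, dm lam S₁ S₂ a b + dm lam S₂ S₃ b c
  have hpre : dmF lam S₁ S₃ comp ≤ comp := fun a c => le_iInf fun b =>
    (dmF_le_add (fun a b c => iInf_le _ b) a b c).trans_eq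
      (by rw [(dm_isFixedPt lam S₁ S₂).eq, (dm_isFixedPt lam S₂ S₃).eq])
  exact (OrderHom.lfp_le _ hpre s₁ s₃).trans (iInf_le _ s₂)

theorem dm_wellDefined_and_hemimetric_general {Act : Type} (lam : ℝ≥0∞)
    (S S₁ S₂ S₃ : WMTS Act) :
    (∃! f : S₁.State → S₂.State → ℝ≥0∞,
        Function.IsFixedPt (dmF lam S₁ S₂) f ∧
          ∀ g, Function.IsFixedPt (dmF lam S₁ S₂) g → f ≤ g) ∧
    Function.IsFixedPt (dmF lam S₁ S₂) (dm lam S₁ S₂) ∧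
    (∀ g, Function.IsFixedPt (dmF lam S₁ S₂) g → dm lam S₁ S₂ ≤ g) ∧
    (∀ s : S.State, dm lam S S s s = 0) ∧
    (∀ (s₁ : S₁.State) (s₂ : S₂.State) (s₃ : S₃.State),
      dm lam S₁ S₃ s₁ s₃ ≤ dm lam S₁ S₂ s₁ s₂ + dm lam S₂ S₃ s₂ s₃) :=
  ⟨⟨dm lam S₁ S₂, ⟨dm_isFixedPt lam S₁ S₂, fun _ => dm_le_of_isFixedPt⟩,
      fun _ hf => le_antisymm (hf.2 _ (dm_isFixedPt lam S₁ S₂)) (dm_le_of_isFixedPt hf.1)⟩,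
    dm_isFixedPt lam S₁ S₂, fun _ => dm_le_of_isFixedPt, dm_self lam S,
    dm_triangle lam S₁ S₂ S₃⟩

/-- the modal refinement distance is well-defined (the defining
system of equations has a unique least fixed point) and is a hemimetric. -/
theorem dm_wellDefined_and_hemimetric {Act : Type} (lam : ℝ≥0∞)
    (hlam0 : 0 < lam) (hlam1 : lam < 1) (S S₁ S₂ S₃ : WMTS Act) :
    (∃! f : S₁.State → S₂.State → ℝ≥0∞,
        Function.IsFixedPt (dmF lam S₁ S₂) f ∧
          ∀ g, Function.IsFixedPt (dmF lam S₁ S₂) g → f ≤ g) ∧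
    Function.IsFixedPt (dmF lam S₁ S₂) (dm lam S₁ S₂) ∧
    (∀ g, Function.IsFixedPt (dmF lam S₁ S₂) g → dm lam S₁ S₂ ≤ g) ∧
    (∀ s : S.State, dm lam S S s s = 0) ∧
    (∀ (s₁ : S₁.State) (s₂ : S₂.State) (s₃ : S₃.State),
      dm lam S₁ S₃ s₁ s₃ ≤ dm lam S₁ S₂ s₁ s₂ + dm lam S₂ S₃ s₂ s₃) :=
  dm_wellDefined_and_hemimetric_general lam S S₁ S₂ S₃

end WMTSQuant
end

section
/- For every WMTS S and every δ ∈ ℕ, the δ-widening S^{+δ} is a (1−λ)⁻¹·δ-relaxation of S; that is, S ≤_m S^{+δ} and d_m(S^{+δ},S) ≤ (1−λ)⁻¹·δ. -/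
open scoped ENNReal

namespace WMTSQuant

variable {Act : Type}

/-! Matching every transition with its own widening, the identity relation witnesses
`S ≤ₘ S⁺δ`; in the other direction it matches each widened label with its original at
label distance at most `δ`. Along the identity relation the refinement distance is therefore
bounded by every `c` with `δ + λ c ≤ c`, and `c = (1 - λ)⁻¹ δ = δ ∑ λⁿ` is such a bound. -/

lemma _root_.ENNReal.one_add_mul_inv_one_sub (r : ℝ≥0∞) : 1 + r * (1 - r)⁻¹ = (1 - r)⁻¹ := by
  rw [← ENNReal.tsum_geometric_add_one, ← ENNReal.tsum_geometric,
    tsum_eq_zero_add' (f := (r ^ ·)) ENNReal.summable, pow_zero]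

lemma erealToNNE_le_ofReal {x : EReal} {r : ℝ} (h : x ≤ r) :
    erealToNNE x ≤ ENNReal.ofReal r := by
  rw [erealToNNE, if_neg (h.trans_lt (EReal.coe_lt_top r)).ne]
  rcases eq_or_ne x ⊥ with rfl | hx
  · simp
  · exact ENNReal.ofReal_le_ofReal <| by
      simpa using EReal.toReal_le_toReal h hx (EReal.coe_ne_top r)

namespace EInterval

lemma lo_widen_le (I : EInterval) (δ : ℕ) : (I.widen δ).lo ≤ I.lo :=
  EReal.sub_le_of_le_add <| le_add_of_nonneg_right <| by exact_mod_cast δ.cast_nonneg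

lemma hi_le_hi_widen (I : EInterval) (δ : ℕ) : I.hi ≤ (I.widen δ).hi :=
  le_add_of_nonneg_right <| by exact_mod_cast δ.cast_nonneg

lemma lo_sub_lo_widen_le (I : EInterval) (δ : ℕ) : I.lo - (I.widen δ).lo ≤ (δ : ℝ) :=
  EReal.sub_le_of_le_add' EReal.sub_add_cancel.ge

lemma hi_widen_sub_hi_le (I : EInterval) (δ : ℕ) : (I.widen δ).hi - I.hi ≤ (δ : ℝ) :=
  EReal.sub_le_of_le_add' le_rfl

end EInterval

lemma labelLE_widen (a : Act) (I : EInterval) (δ : ℕ) : LabelLE (a, I) (a, I.widen δ) :=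
  ⟨rfl, I.lo_widen_le δ, I.hi_le_hi_widen δ⟩

lemma dK_widen_le (a : Act) (I : EInterval) (δ : ℕ) : dK (a, I.widen δ) (a, I) ≤ δ := by
  rw [dK, if_pos rfl, ← ENNReal.ofReal_natCast]
  refine erealToNNE_le_ofReal <| max_le (I.lo_sub_lo_widen_le δ) <|
    max_le (I.hi_widen_sub_hi_le δ) ?_
  exact_mod_cast δ.cast_nonneg

lemma refines_widen (S : WMTS Act) (δ : ℕ) : Refines S (S.widen δ) := by
  refine ⟨Eq, rfl, ?_⟩
  rintro s _ rfl
  constructor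
  · rintro ⟨a, I⟩ t h
    exact ⟨(a, I.widen δ), t, ⟨a, I, h, rfl⟩, labelLE_widen a I δ, rfl⟩
  · rintro _ t ⟨a, I, h, rfl⟩
    exact ⟨(a, I), t, h, labelLE_widen a I δ, rfl⟩

lemma dm_le_of_forall_dK_le {lam ε c : ℝ≥0∞} (hc : ε + lam * c ≤ c) {S₁ S₂ : WMTS Act}
    (R : S₁.State → S₂.State → Prop)
    (hmay : ∀ s₁ s₂, R s₁ s₂ → ∀ k₁ t₁, S₁.may s₁ k₁ t₁ →
      ∃ k₂ t₂, S₂.may s₂ k₂ t₂ ∧ dK k₁ k₂ ≤ ε ∧ R t₁ t₂)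
    (hmust : ∀ s₁ s₂, R s₁ s₂ → ∀ k₂ t₂, S₂.must s₂ k₂ t₂ →
      ∃ k₁ t₁, S₁.must s₁ k₁ t₁ ∧ dK k₁ k₂ ≤ ε ∧ R t₁ t₂)
    {s₁ : S₁.State} {s₂ : S₂.State} (h : R s₁ s₂) : dm lam S₁ S₂ s₁ s₂ ≤ c := by
  classical
  -- `c` on `R` and `⊤` off it is a prefixed point of `dmF`, hence bounds its least fixed point.
  let g : S₁.State → S₂.State → ℝ≥0∞ := fun s₁ s₂ => if R s₁ s₂ then c else ⊤
  have hg : ∀ {s₁ s₂}, R s₁ s₂ → g s₁ s₂ = c := fun h => if_pos h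
  have step : ∀ {k₁ k₂ : SLabel Act} {t₁ t₂}, dK k₁ k₂ ≤ ε → R t₁ t₂ →
      dK k₁ k₂ + lam * g t₁ t₂ ≤ c :=
    fun hk ht => by rw [hg ht]; exact (add_le_add hk le_rfl).trans hc
  have hpre : dmF lam S₁ S₂ g ≤ g := by
    intro s₁ s₂
    by_cases hs : R s₁ s₂
    · rw [hg hs]
      refine max_le (iSup_le fun k₁ => iSup₂_le fun t₁ hk => ?_)
        (iSup_le fun k₂ => iSup₂_le fun t₂ hk => ?_)
      · obtain ⟨k₂, t₂, hk₂, hd, ht⟩ := hmay s₁ s₂ hs k₁ t₁ hk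
        exact (iInf_le_of_le k₂ (iInf₂_le t₂ hk₂)).trans (step hd ht)
      · obtain ⟨k₁, t₁, hk₁, hd, ht⟩ := hmust s₁ s₂ hs k₂ t₂ hk
        exact (iInf_le_of_le k₁ (iInf₂_le t₁ hk₁)).trans (step hd ht)
    · exact le_top.trans_eq (if_neg hs).symm
  exact (OrderHom.lfp_le _ hpre s₁ s₂).trans_eq (hg h)

lemma dm_widen_self_le (lam : ℝ≥0∞) (S : WMTS Act) (δ : ℕ) (s : S.State) :
    dm lam (S.widen δ) S s s ≤ (1 - lam)⁻¹ * δ := by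
  have hc : (δ : ℝ≥0∞) + lam * ((1 - lam)⁻¹ * δ) ≤ (1 - lam)⁻¹ * δ := by
    rw [← mul_assoc, ← one_add_mul, ENNReal.one_add_mul_inv_one_sub]
  refine dm_le_of_forall_dK_le hc (S₁ := S.widen δ) (S₂ := S) Eq ?_ ?_ rfl
  · rintro s _ rfl _ t ⟨a, I, h, rfl⟩
    exact ⟨(a, I), t, h, dK_widen_le a I δ, rfl⟩
  · rintro s _ rfl ⟨a, I⟩ t h
    exact ⟨(a, I.widen δ), t, ⟨a, I, h, rfl⟩, dK_widen_le a I δ, rfl⟩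

theorem widening_is_relaxation_general {Act : Type} (lam : ℝ≥0∞)
    (S : WMTS Act) (δ : ℕ) :
    Relaxation lam ((1 - lam)⁻¹ * (δ : ℝ≥0∞)) S (S.widen δ) :=
  ⟨refines_widen S δ, dm_widen_self_le lam S δ S.init⟩

/-- the δ-widening of any WMTS S is a (1−λ)⁻¹δ-relaxation of S:
S ≤ₘ S⁺δ and d_m(S⁺δ, S) ≤ (1−λ)⁻¹·δ. -/
theorem widening_is_relaxation {Act : Type} (lam : ℝ≥0∞)
    (hlam0 : 0 < lam) (hlam1 : lam < 1) (S : WMTS Act) (δ : ℕ) :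
    Relaxation lam ((1 - lam)⁻¹ * (δ : ℝ≥0∞)) S (S.widen δ) :=
  widening_is_relaxation_general lam S δ

end WMTSQuant
end

section
/- If a WMTS S' is an ε-relaxation of a WMTS S, then ⟦S'⟧ ⊆ ⟦S⟧^{+ε}, i.e., every implementation of S' is within modal refinement distance ε of S. -/
open scoped ENNReal

namespace WMTSQuant

variable {Act : Type}

lemma erealToNNE_mono : Monotone erealToNNE := by
  intro x y h
  unfold erealToNNE
  split_ifs with hx hy
  · exact le_rfl
  · exact absurd (top_le_iff.mp (hx ▸ h)) hy
  · exact le_top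
  · rcases eq_or_ne x ⊥ with hb | hb
    · simp [hb]
    · exact ENNReal.ofReal_le_ofReal (EReal.toReal_le_toReal h hb ‹_›)

lemma dK_mono_left {k k' ℓ : SLabel Act} (h : LabelLE k k') : dK k ℓ ≤ dK k' ℓ := by
  obtain ⟨hact, hlo, hhi⟩ := h
  unfold dK
  rw [hact]
  split_ifs
  · exact erealToNNE_mono (max_le_max (EReal.sub_le_sub le_rfl hlo)
      (max_le_max (EReal.sub_le_sub hhi le_rfl) le_rfl))
  · exact le_rfl

def IsRefinementRel (S₁ S₂ : WMTS Act) (R : S₁.State → S₂.State → Prop) : Prop :=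
  ∀ s₁ s₂, R s₁ s₂ →
    (∀ k₁ t₁, S₁.may s₁ k₁ t₁ →
      ∃ k₂ t₂, S₂.may s₂ k₂ t₂ ∧ LabelLE k₁ k₂ ∧ R t₁ t₂) ∧
    (∀ k₂ t₂, S₂.must s₂ k₂ t₂ →
      ∃ k₁ t₁, S₁.must s₁ k₁ t₁ ∧ LabelLE k₁ k₂ ∧ R t₁ t₂)

section Refinement

variable (lam : ℝ≥0∞) {S₁ S₂ : WMTS Act} (S₃ : WMTS Act)
  {R : S₁.State → S₂.State → Prop}

lemma dmF_le_of_isRefinementRel (hR : IsRefinementRel S₁ S₂ R)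
    (f : S₂.State → S₃.State → ℝ≥0∞) {s₁ : S₁.State} {s₂ : S₂.State} (hs : R s₁ s₂)
    (s₃ : S₃.State) :
    dmF lam S₁ S₃ (fun t₁ t₃ => ⨅ t₂, ⨅ _ : R t₁ t₂, f t₂ t₃) s₁ s₃ ≤
      dmF lam S₂ S₃ f s₂ s₃ := by
  refine max_le_max ?may ?must
  case may =>
    refine iSup₂_le fun k₁ t₁ => iSup_le fun hmay₁ => ?_
    obtain ⟨k₂, t₂, hmay₂, hk, ht⟩ := (hR s₁ s₂ hs).1 k₁ t₁ hmay₁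
    refine le_trans ?_ (le_iSup₂_of_le k₂ t₂ (le_iSup_of_le hmay₂ le_rfl))
    refine le_iInf₂ fun k₃ t₃ => le_iInf fun hmay₃ => ?_
    refine le_trans (iInf₂_le_of_le k₃ t₃ (iInf_le_of_le hmay₃ le_rfl)) ?_
    gcongr
    · exact dK_mono_left hk
    · exact iInf₂_le t₂ ht
  case must =>
    refine iSup₂_le fun k₃ t₃ => iSup_le fun hmust₃ => ?_
    refine le_trans ?_ (le_iSup₂_of_le k₃ t₃ (le_iSup_of_le hmust₃ le_rfl))
    refine le_iInf₂ fun k₂ t₂ => le_iInf fun hmust₂ => ?_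
    obtain ⟨k₁, t₁, hmust₁, hk, ht⟩ := (hR s₁ s₂ hs).2 k₂ t₂ hmust₂
    refine le_trans (iInf₂_le_of_le k₁ t₁ (iInf_le_of_le hmust₁ le_rfl)) ?_
    gcongr
    · exact dK_mono_left hk
    · exact iInf₂_le t₂ ht

/-- The infimum of `dm lam S₂ S₃` over `R`-related states is a prefixed point of
`dmF lam S₁ S₃`, so it dominates the least fixed point. -/
lemma dm_le_of_isRefinementRel (hR : IsRefinementRel S₁ S₂ R) {s₁ : S₁.State}
    {s₂ : S₂.State} (hs : R s₁ s₂) (s₃ : S₃.State) :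
    dm lam S₁ S₃ s₁ s₃ ≤ dm lam S₂ S₃ s₂ s₃ := by
  have hpre : dmF lam S₁ S₃ (fun t₁ t₃ => ⨅ t₂, ⨅ _ : R t₁ t₂, dm lam S₂ S₃ t₂ t₃) ≤
      fun t₁ t₃ => ⨅ t₂, ⨅ _ : R t₁ t₂, dm lam S₂ S₃ t₂ t₃ := fun t₁ t₃ =>
    le_iInf₂ fun t₂ ht => (dmF_le_of_isRefinementRel lam S₃ hR _ ht t₃).trans_eq
      (congrFun₂ (OrderHom.map_lfp (dmF lam S₂ S₃)) t₂ t₃)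
  exact (OrderHom.lfp_le _ hpre s₁ s₃).trans (iInf₂_le s₂ hs)

lemma dmInit_le_of_refines (h : Refines S₁ S₂) : dmInit lam S₁ S₃ ≤ dmInit lam S₂ S₃ :=
  let ⟨_, hinit, hR⟩ := h
  dm_le_of_isRefinementRel lam S₃ hR hinit S₃.init

end Refinement

theorem relaxation_impl_subset_general {Act : Type} (lam : ℝ≥0∞)
    (ε : ℝ≥0∞) (S S' : WMTS Act)
    (hrel : Relaxation lam ε S S') :
    Impl S' ⊆ ImplExt lam ε S := by
  rintro I ⟨hImp, hIS'⟩
  exact ⟨hImp, (dmInit_le_of_refines lam S hIS').trans hrel.2⟩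

/-- if S' is an ε-relaxation of S then every implementation of
S' lies in the ε-extended implementation semantics of S. -/
theorem relaxation_impl_subset {Act : Type} (lam : ℝ≥0∞)
    (hlam0 : 0 < lam) (hlam1 : lam < 1) (ε : ℝ≥0∞) (S S' : WMTS Act)
    (hrel : Relaxation lam ε S S') :
    Impl S' ⊆ ImplExt lam ε S :=
  relaxation_impl_subset_general lam ε S S' hrel

end WMTSQuant
end
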